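/- arXiv:1908.00980 — 3 statements merged into one kernel-verified Lean document; each statement's English description precedes it below -/
import Mathlib

section
/- Suppose X(y,t) is smooth with X_y > 0, q(X(y,t),t) = 1/X_y(y,t)², and u, q satisfy ∂_t√q + ∂_X(√q·u) = 0 (the Camassa-Holm conservation form). If X_y → 1/√u₀ and X_t → u₀ as y → ∞, and u(X,t) → u₀, then u(X(y,t),t) = X_t(y,t). -/
open Filter Topology

/-- Partial derivative in the first variable. -/
noncomputable def p1 (f : ℝ × ℝ → ℝ) : ℝ × ℝ → ℝ :=
  fun p => deriv (fun x => f (x, p.2)) p.1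

/-- Partial derivative in the second variable. -/
noncomputable def p2 (f : ℝ × ℝ → ℝ) : ℝ × ℝ → ℝ :=
  fun p => deriv (fun t => f (p.1, t)) p.2

lemma clm_pair (A : ℝ × ℝ →L[ℝ] ℝ) (c d : ℝ) :
    A (c, d) = c * A (1, 0) + d * A (0, 1) := by
  have h : (c, d) = c • ((1:ℝ), (0:ℝ)) + d • ((0:ℝ), (1:ℝ)) := by
    simp [Prod.ext_iff]
  rw [h, map_add, map_smul, map_smul, smul_eq_mul, smul_eq_mul]

/-- Chain rule for a curve into the plane composed with a map. -/
lemma comp_curve {E : Type*} [NormedAddCommGroup E] [NormedSpace ℝ E]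
    (f : ℝ × ℝ → E) (hf : Differentiable ℝ f) (c₁ c₂ : ℝ → ℝ) (d₁ d₂ x : ℝ)
    (h₁ : HasDerivAt c₁ d₁ x) (h₂ : HasDerivAt c₂ d₂ x) :
    HasDerivAt (fun r => f (c₁ r, c₂ r)) (fderiv ℝ f (c₁ x, c₂ x) (d₁, d₂)) x := by
  have := (hf (c₁ x, c₂ x)).hasFDerivAt.comp_hasDerivAt x (h₁.prodMk h₂)
  simpa [Function.comp_def] using this

lemma p1_eq (f : ℝ × ℝ → ℝ) (y t : ℝ) (hf : DifferentiableAt ℝ f (y, t)) :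
    p1 f (y, t) = fderiv ℝ f (y, t) (1, 0) := by
  have h1 : HasDerivAt (fun x : ℝ => (x, t)) ((1:ℝ), (0:ℝ)) y :=
    (hasDerivAt_id y).prodMk (hasDerivAt_const y t)
  have h2 := hf.hasFDerivAt.comp_hasDerivAt y h1
  simpa [p1, Function.comp_def] using h2.deriv

lemma p2_eq (f : ℝ × ℝ → ℝ) (y t : ℝ) (hf : DifferentiableAt ℝ f (y, t)) :
    p2 f (y, t) = fderiv ℝ f (y, t) (0, 1) := by
  have h1 : HasDerivAt (fun s : ℝ => (y, s)) ((0:ℝ), (1:ℝ)) t :=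
    (hasDerivAt_const t y).prodMk (hasDerivAt_id t)
  have h2 := hf.hasFDerivAt.comp_hasDerivAt t h1
  simpa [p2, Function.comp_def] using h2.deriv

set_option maxHeartbeats 1000000 in
/-- if `X(y,t)` is the parametric change of variables for the
Camassa-Holm equation, with `X_y > 0`, `q(X(y,t),t) = 1/X_y²`, the conservation
form `∂_t√q + ∂_x(√q·u) = 0`, and asymptotics `X_y → 1/√u₀`, `X_t → u₀`,
`u(X,t) → u₀` as `y → ∞`, then `u(X(y,t),t) = X_t(y,t)`. -/
theorem parametric_solution_CH
    (u₀ : ℝ) (hu₀ : 0 < u₀)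
    (u q : ℝ × ℝ → ℝ) (hu : ContDiff ℝ (⊤ : ℕ∞) u) (hqs : ContDiff ℝ (⊤ : ℕ∞) q)
    (hqpos : ∀ p, 0 < q p)
    (X : ℝ × ℝ → ℝ) (hX : ContDiff ℝ (⊤ : ℕ∞) X)
    (hXy : ∀ y t, 0 < p1 X (y, t))
    (hq : ∀ y t, q (X (y, t), t) = 1 / (p1 X (y, t)) ^ 2)
    (hcons : ∀ x t,
      p2 (fun p => Real.sqrt (q p)) (x, t)
        + p1 (fun p => Real.sqrt (q p) * u p) (x, t) = 0)
    (hlim1 : ∀ t, Tendsto (fun y => p1 X (y, t)) atTop (𝓝 (1 / Real.sqrt u₀)))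
    (hlim2 : ∀ t, Tendsto (fun y => p2 X (y, t)) atTop (𝓝 u₀))
    (hlim3 : ∀ t, Tendsto (fun y => u (X (y, t), t)) atTop (𝓝 u₀)) :
    ∀ y t, u (X (y, t), t) = p2 X (y, t) := by
  have hXd : Differentiable ℝ X := hX.differentiable (by simp)
  have hud : Differentiable ℝ u := hu.differentiable (by simp)
  set s : ℝ × ℝ → ℝ := fun p => Real.sqrt (q p) with hs_def
  have hs : ContDiff ℝ (⊤ : ℕ∞) s := hqs.sqrt (fun p => (hqpos p).ne')
  set F : ℝ × ℝ → ℝ := fun p => Real.sqrt (q p) * u p with hF_def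
  have hF : ContDiff ℝ (⊤ : ℕ∞) F := hs.mul hu
  have hsd : Differentiable ℝ s := hs.differentiable (by simp)
  have hFd : Differentiable ℝ F := hF.differentiable (by simp)
  have hΦ : ContDiff ℝ (⊤ : ℕ∞) (fderiv ℝ X) := hX.fderiv_right (by simp)
  have hΦd : Differentiable ℝ (fderiv ℝ X) := hΦ.differentiable (by simp)
  -- global pointwise identity: √q(X(y,t),t) = (X_y)⁻¹
  have hsinv : ∀ y t, s (X (y, t), t) = (p1 X (y, t))⁻¹ := by
    intro y t
    have ha := hXy y t
    have hqq : q (X (y, t), t) = ((p1 X (y, t))⁻¹) ^ 2 := by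
      rw [hq y t]; field_simp
    show Real.sqrt (q (X (y, t), t)) = (p1 X (y, t))⁻¹
    rw [hqq]
    exact Real.sqrt_sq (le_of_lt (inv_pos.mpr ha))
  have e1 : ∀ y t, p1 X (y, t) = fderiv ℝ X (y, t) (1, 0) :=
    fun y t => p1_eq X y t (hXd _)
  have e2 : ∀ y t, p2 X (y, t) = fderiv ℝ X (y, t) (0, 1) :=
    fun y t => p2_eq X y t (hXd _)
  -- curve derivatives of X
  have hXc1 : ∀ y t, HasDerivAt (fun x => X (x, t)) (p1 X (y, t)) y := by
    intro y t
    rw [e1]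
    simpa using comp_curve X hXd id (fun _ => t) 1 0 y (hasDerivAt_id y)
      (hasDerivAt_const y t)
  have hXc2 : ∀ y t, HasDerivAt (fun r => X (y, r)) (p2 X (y, t)) t := by
    intro y t
    rw [e2]
    simpa using comp_curve X hXd (fun _ => y) id 0 1 t (hasDerivAt_const t y)
      (hasDerivAt_id t)
  intro y t
  -- the key function g of y, for this fixed t
  set g : ℝ → ℝ := fun x => (u (X (x, t), t) - p2 X (x, t)) * (p1 X (x, t))⁻¹ with hg_def
  have hane : ∀ x, p1 X (x, t) ≠ 0 := fun x => (hXy x t).ne'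
  -- g equals F∘curve − (p2 X)·(s∘curve)
  have hgeq : g = fun x => F (X (x, t), t) - p2 X (x, t) * s (X (x, t), t) := by
    funext x
    have h := hsinv x t
    show (u (X (x, t), t) - p2 X (x, t)) * (p1 X (x, t))⁻¹
        = s (X (x, t), t) * u (X (x, t), t) - p2 X (x, t) * s (X (x, t), t)
    rw [h]; ring
  -- g has derivative 0 everywhere
  have hg0 : ∀ x, HasDerivAt g 0 x := by
    intro x
    have ha : 0 < p1 X (x, t) := hXy x t
    set a : ℝ := p1 X (x, t) with hadef
    set b : ℝ := p2 X (x, t) with hbdef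
    set z : ℝ × ℝ := (X (x, t), t) with hz
    set D := fderiv ℝ (fderiv ℝ X) (x, t) with hD
    set m : ℝ := D (1, 0) (0, 1) with hm
    have hsym : D (0, 1) (1, 0) = m :=
      second_derivative_symmetric (fun w => (hXd w).hasFDerivAt)
        ((hΦd (x, t)).hasFDerivAt) _ _
    -- conservation law at z
    have hc : fderiv ℝ s z (0, 1) + fderiv ℝ F z (1, 0) = 0 := by
      have h := hcons (X (x, t)) t
      rwa [p2_eq _ _ _ (hsd _), p1_eq _ _ _ (hFd _)] at h
    -- derivative of x' ↦ p2 X (x', t)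
    have hΦc : HasDerivAt (fun r => fderiv ℝ X (r, t)) (D (1, 0)) x := by
      have := comp_curve (fderiv ℝ X) hΦd id (fun _ => t) 1 0 x (hasDerivAt_id x)
        (hasDerivAt_const x t)
      simpa using this
    have h2 : HasDerivAt (fun r => p2 X (r, t)) m x := by
      have h2' : HasDerivAt (fun r => fderiv ℝ X (r, t) (0, 1)) m x := by
        simpa [hm] using hΦc.clm_apply (hasDerivAt_const x ((0:ℝ), (1:ℝ)))
      have heq : (fun r => p2 X (r, t)) = fun r => fderiv ℝ X (r, t) (0, 1) :=
        funext fun r => e2 r t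
      rw [heq]; exact h2'
    -- derivatives of F and s along the horizontal curve
    have h1F : HasDerivAt (fun r => F (X (r, t), t)) (fderiv ℝ F z (a, 0)) x := by
      have := comp_curve F hFd (fun r => X (r, t)) (fun _ => t) a 0 x (hXc1 x t)
        (hasDerivAt_const x t)
      simpa using this
    have h3s : HasDerivAt (fun r => s (X (r, t), t)) (fderiv ℝ s z (a, 0)) x := by
      have := comp_curve s hsd (fun r => X (r, t)) (fun _ => t) a 0 x (hXc1 x t)
        (hasDerivAt_const x t)
      simpa using this
    -- t-direction identity: fderiv s z (b,1) = -m/a²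
    have htid : fderiv ℝ s z (b, 1) = -m / a ^ 2 := by
      have hA : HasDerivAt (fun r => s (X (x, r), r)) (fderiv ℝ s z (b, 1)) t := by
        have := comp_curve s hsd (fun r => X (x, r)) id b 1 t (hXc2 x t) (hasDerivAt_id t)
        simpa using this
      have heq : (fun r => s (X (x, r), r)) = fun r => (fderiv ℝ X (x, r) (1, 0))⁻¹ := by
        funext r
        rw [show s (X (x, r), r) = (p1 X (x, r))⁻¹ from hsinv x r, e1 x r]
      have hΦc2 : HasDerivAt (fun r => fderiv ℝ X (x, r)) (D (0, 1)) t := by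
        have := comp_curve (fderiv ℝ X) hΦd (fun _ => x) id 0 1 t (hasDerivAt_const t x)
          (hasDerivAt_id t)
        simpa using this
      have hB1 : HasDerivAt (fun r => fderiv ℝ X (x, r) (1, 0)) m t := by
        simpa [hsym] using hΦc2.clm_apply (hasDerivAt_const t ((1:ℝ), (0:ℝ)))
      have hB : HasDerivAt (fun r => (fderiv ℝ X (x, r) (1, 0))⁻¹)
          (-m / (fderiv ℝ X (x, t) (1, 0)) ^ 2) t :=
        hB1.inv (by rw [← e1 x t]; exact hane x)
      rw [heq] at hA
      have huniq := hA.unique hB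
      rw [huniq, ← e1 x t]
    -- the derivative value is 0
    have hval : fderiv ℝ F z (a, 0) - (m * s z + b * fderiv ℝ s z (a, 0)) = 0 := by
      have hsz : s z = a⁻¹ := hsinv x t
      have hP := clm_pair (fderiv ℝ s z) b 1
      have hQ := clm_pair (fderiv ℝ s z) a 0
      have hR := clm_pair (fderiv ℝ F z) a 0
      rw [htid] at hP
      have hc' : fderiv ℝ F z (1, 0) = -fderiv ℝ s z (0, 1) := by linarith
      rw [hsz, hQ, hR, hc']
      have hane' : a ≠ 0 := ha.ne'
      have hkey : (b * fderiv ℝ s z (1, 0) + fderiv ℝ s z (0, 1)) * a ^ 2 = -m := by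
        have ha2 : (a:ℝ) ^ 2 ≠ 0 := pow_ne_zero 2 hane'
        field_simp at hP
        linarith
      field_simp
      nlinarith [hkey]
    have hgder : HasDerivAt g
        (fderiv ℝ F z (a, 0) - (m * s z + b * fderiv ℝ s z (a, 0))) x := by
      rw [hgeq]
      exact h1F.sub (h2.mul h3s)
    rw [hval] at hgder
    exact hgder
  -- g is constant with limit 0 at infinity, hence ≡ 0
  have hgc : ∀ x₁ x₂, g x₁ = g x₂ := fun x₁ x₂ =>
    is_const_of_deriv_eq_zero (fun r => (hg0 r).differentiableAt)
      (fun r => (hg0 r).deriv) x₁ x₂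
  have hden : (1 / Real.sqrt u₀) ≠ 0 := by
    have := Real.sqrt_pos.mpr hu₀
    positivity
  have hlim : Tendsto g atTop (𝓝 0) := by
    have h := ((hlim3 t).sub (hlim2 t)).mul ((hlim1 t).inv₀ hden)
    simpa [hg_def, sub_self] using h
  have hgy : g y = 0 := by
    have h1 : Tendsto g atTop (𝓝 (g y)) := by
      have hcst : g = fun _ => g y := funext fun r => hgc r y
      rw [hcst]; exact tendsto_const_nhds
    exact tendsto_nhds_unique h1 hlim
  have hsub : u (X (y, t), t) - p2 X (y, t) = 0 := by
    rcases mul_eq_zero.mp hgy with h | h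
    · exact h
    · exact absurd h (inv_ne_zero (hane y))
  linarith
end

section
/- For the one-cuspon solution with U = Λ/h₀ > 1, one has X_y = (U²-1)sinh²Ω/(√u₀[U² + (U²-1)sinh²Ω]), and the profile slope u_X = (∂u/∂y)/X_y equals -U³(u₀ - 1/(2λ₁²))·coth Ω/(U² + (U²-1)sinh²Ω); in particular, if u₀ > 1/(2λ₁²) then u_X → +∞ as Ω → 0⁻ and u_X → -∞ as Ω → 0⁺. -/
open Filter Topology

noncomputable def rcoth (z : ℝ) : ℝ := Real.cosh z / Real.sinh z

/-!
For `U ≥ 1` the numbers `U cosh z ∓ sinh z` are positive with product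
`D(z) = U² + (U² - 1) sinh² z`, so away from `Ω = 0` the logarithmic term of `X` is
`log (U cosh Ω - sinh Ω) - log (U cosh Ω + sinh Ω)`, whose derivative is `-2U / D(Ω)`.
As `Ω` is affine in `(y, t)`, with `2√u₀ Λ = U` and `1 / (2h₀) = √u₀` this gives
`X_y = (U² - 1) sinh² Ω / (√u₀ D)` and `u = X_t = u₀ + U² κ / D`, `κ = u₀ - 1 / (2λ₁²)`.
In `u_y / X_y` the factor `(U² - 1) sinh² Ω` cancels against `D' = (U² - 1) sinh 2Ω`, leaving
`coth Ω`; the limits follow since `coth Ω → ±∞` as `Ω → 0±` while `D → U² > 0`.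
-/

open Real

noncomputable def logCothRatio (U z : ℝ) : ℝ := log |(U * rcoth z - 1) / (U * rcoth z + 1)|

noncomputable def cusponDenom (U z : ℝ) : ℝ := U ^ 2 + (U ^ 2 - 1) * sinh z ^ 2

lemma StrictMono.tendsto_nhdsLT_of_continuousAt {α β : Type*} [Preorder α] [Preorder β]
    [TopologicalSpace α] [TopologicalSpace β] {f : α → β} {x : α} (hf : StrictMono f)
    (hc : ContinuousAt f x) : Tendsto f (𝓝[<] x) (𝓝[<] (f x)) :=
  tendsto_nhdsWithin_of_tendsto_nhds_of_eventually_within _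
    (hc.tendsto.mono_left nhdsWithin_le_nhds) (eventually_nhdsWithin_of_forall fun _ hy => hf hy)

lemma StrictMono.tendsto_nhdsGT_of_continuousAt {α β : Type*} [Preorder α] [Preorder β]
    [TopologicalSpace α] [TopologicalSpace β] {f : α → β} {x : α} (hf : StrictMono f)
    (hc : ContinuousAt f x) : Tendsto f (𝓝[>] x) (𝓝[>] (f x)) :=
  tendsto_nhdsWithin_of_tendsto_nhds_of_eventually_within _
    (hc.tendsto.mono_left nhdsWithin_le_nhds) (eventually_nhdsWithin_of_forall fun _ hy => hf hy)

section Hyperbolic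

variable {U : ℝ}

lemma mul_cosh_sub_sinh_pos (hU : 1 ≤ U) (z : ℝ) : 0 < U * cosh z - sinh z :=
  calc 0 < exp (-z) := exp_pos _
    _ = cosh z - sinh z := (cosh_sub_sinh z).symm
    _ ≤ U * cosh z - sinh z := by gcongr; exact le_mul_of_one_le_left (cosh_pos z).le hU

lemma mul_cosh_add_sinh_pos (hU : 1 ≤ U) (z : ℝ) : 0 < U * cosh z + sinh z :=
  calc 0 < exp z := exp_pos _
    _ = cosh z + sinh z := (cosh_add_sinh z).symm
    _ ≤ U * cosh z + sinh z := by gcongr; exact le_mul_of_one_le_left (cosh_pos z).le hU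

lemma cusponDenom_eq_mul (U z : ℝ) :
    cusponDenom U z = (U * cosh z - sinh z) * (U * cosh z + sinh z) := by
  rw [cusponDenom]
  linear_combination (-U ^ 2) * cosh_sq z

lemma cusponDenom_pos (hU : 1 ≤ U) (z : ℝ) : 0 < cusponDenom U z :=
  cusponDenom_eq_mul U z ▸ mul_pos (mul_cosh_sub_sinh_pos hU z) (mul_cosh_add_sinh_pos hU z)

lemma hasDerivAt_cusponDenom (U z : ℝ) :
    HasDerivAt (cusponDenom U) ((U ^ 2 - 1) * (2 * sinh z * cosh z)) z := by
  have h := (((hasDerivAt_sinh z).pow 2).const_mul (U ^ 2 - 1)).const_add (U ^ 2)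
  exact h.congr_deriv (by push_cast; ring)

lemma logCothRatio_eq (hU : 1 ≤ U) {z : ℝ} (hz : z ≠ 0) :
    logCothRatio U z = log (U * cosh z - sinh z) - log (U * cosh z + sinh z) := by
  have hp := mul_cosh_sub_sinh_pos hU z
  have hq := mul_cosh_add_sinh_pos hU z
  have hs : sinh z ≠ 0 := sinh_ne_zero.mpr hz
  have hratio : (U * rcoth z - 1) / (U * rcoth z + 1)
      = (U * cosh z - sinh z) / (U * cosh z + sinh z) := by
    rw [rcoth]; field_simp
  rw [logCothRatio, hratio, abs_of_pos (div_pos hp hq), log_div hp.ne' hq.ne']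

lemma hasDerivAt_logCothRatio (hU : 1 ≤ U) {z : ℝ} (hz : z ≠ 0) :
    HasDerivAt (logCothRatio U) (-2 * U / cusponDenom U z) z := by
  have hp := mul_cosh_sub_sinh_pos hU z
  have hq := mul_cosh_add_sinh_pos hU z
  have hsub : HasDerivAt (fun w => U * cosh w - sinh w) (U * sinh z - cosh z) z :=
    ((hasDerivAt_cosh z).const_mul U).sub (hasDerivAt_sinh z)
  have hadd : HasDerivAt (fun w => U * cosh w + sinh w) (U * sinh z + cosh z) z :=
    ((hasDerivAt_cosh z).const_mul U).add (hasDerivAt_sinh z)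
  have hlog := (hsub.log hp.ne').sub (hadd.log hq.ne')
  refine (hlog.congr_of_eventuallyEq ?_).congr_deriv ?_
  · filter_upwards [eventually_ne_nhds hz] with w hw using logCothRatio_eq hU hw
  · rw [cusponDenom_eq_mul]
    field_simp
    linear_combination (-2 * U) * cosh_sq z

lemma tendsto_rcoth_nhdsGT_zero : Tendsto rcoth (𝓝[>] 0) atTop := by
  have hsinh : Tendsto sinh (𝓝[>] 0) (𝓝[>] 0) := by
    simpa using
      sinh_strictMono.tendsto_nhdsGT_of_continuousAt continuous_sinh.continuousAt (x := 0)
  have hcosh : Tendsto cosh (𝓝[>] 0) (𝓝 1) := by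
    simpa using continuous_cosh.continuousAt.tendsto.mono_left (nhdsWithin_le_nhds (a := 0))
  exact hcosh.pos_mul_atTop one_pos hsinh.inv_tendsto_nhdsGT_zero

lemma tendsto_rcoth_nhdsLT_zero : Tendsto rcoth (𝓝[<] 0) atBot := by
  have hsinh : Tendsto sinh (𝓝[<] 0) (𝓝[<] 0) := by
    simpa using
      sinh_strictMono.tendsto_nhdsLT_of_continuousAt continuous_sinh.continuousAt (x := 0)
  have hcosh : Tendsto cosh (𝓝[<] 0) (𝓝 1) := by
    simpa using continuous_cosh.continuousAt.tendsto.mono_left (nhdsWithin_le_nhds (a := 0))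
  exact hcosh.pos_mul_atBot one_pos hsinh.inv_tendsto_nhdsLT_zero

lemma tendsto_inv_cusponDenom (hU : U ≠ 0) {l : Filter ℝ} (hl : l ≤ 𝓝 0) :
    Tendsto (fun z => (cusponDenom U z)⁻¹) l (𝓝 (U ^ 2)⁻¹) := by
  have h := ((hasDerivAt_cusponDenom U 0).continuousAt.tendsto.mono_left hl)
  simpa [cusponDenom] using h.inv₀ (by simpa [cusponDenom] using hU)

lemma tendsto_rcoth_div_cusponDenom_nhdsGT_zero (hU : U ≠ 0) :
    Tendsto (fun z => rcoth z / cusponDenom U z) (𝓝[>] 0) atTop := by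
  simpa only [div_eq_mul_inv] using tendsto_rcoth_nhdsGT_zero.atTop_mul_pos (by positivity)
    (tendsto_inv_cusponDenom hU nhdsWithin_le_nhds)

lemma tendsto_rcoth_div_cusponDenom_nhdsLT_zero (hU : U ≠ 0) :
    Tendsto (fun z => rcoth z / cusponDenom U z) (𝓝[<] 0) atBot := by
  simpa only [div_eq_mul_inv] using tendsto_rcoth_nhdsLT_zero.atBot_mul_pos (by positivity)
    (tendsto_inv_cusponDenom hU nhdsWithin_le_nhds)

end Hyperbolic

section Cuspon

-- In the one-cuspon solution `a = √u₀`, `κ = u₀ - 1 / (2λ₁²)` and `2aΛ = U`.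
variable {a u₀ U Λ κ : ℝ} {Ω X uf : ℝ → ℝ → ℝ}

lemma hasDerivAt_cuspon_phase_y (hΩ : ∀ y t, Ω y t = Λ * (y - a * κ * t)) (y t : ℝ) :
    HasDerivAt (fun y => Ω y t) Λ y := by
  simp only [hΩ]
  simpa using ((hasDerivAt_id y).sub_const (a * κ * t)).const_mul Λ

lemma hasDerivAt_cuspon_phase_t (hΩ : ∀ y t, Ω y t = Λ * (y - a * κ * t)) (y t : ℝ) :
    HasDerivAt (fun t => Ω y t) (-(Λ * (a * κ))) t := by
  simp only [hΩ]
  simpa using (((hasDerivAt_id t).const_mul (a * κ)).const_sub y).const_mul Λ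

lemma hasDerivAt_cuspon_X_y (hU : 1 ≤ U) (ha : a ≠ 0) (hΛ : 2 * a * Λ = U)
    (hΩ : ∀ y t, Ω y t = Λ * (y - a * κ * t))
    (hX : ∀ y t, X y t = y / a + u₀ * t + logCothRatio U (Ω y t)) {y t : ℝ} (h : Ω y t ≠ 0) :
    HasDerivAt (fun y => X y t)
      ((U ^ 2 - 1) * sinh (Ω y t) ^ 2 / (a * cusponDenom U (Ω y t))) y := by
  have hXy := (((hasDerivAt_id y).div_const a).add_const (u₀ * t)).add
    ((hasDerivAt_logCothRatio hU h).comp y (hasDerivAt_cuspon_phase_y hΩ y t))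
  simp only [hX]
  refine hXy.congr_deriv ?_
  have hD := (cusponDenom_pos hU (Ω y t)).ne'
  field_simp
  rw [← hΛ, cusponDenom]
  ring

lemma cuspon_velocity_eq (hU : 1 ≤ U) (hΛ : 2 * a * Λ = U)
    (hΩ : ∀ y t, Ω y t = Λ * (y - a * κ * t))
    (hX : ∀ y t, X y t = y / a + u₀ * t + logCothRatio U (Ω y t))
    (huf : ∀ y t, uf y t = deriv (fun t => X y t) t) {y t : ℝ} (h : Ω y t ≠ 0) :
    uf y t = u₀ + U ^ 2 * κ / cusponDenom U (Ω y t) := by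
  have hXt : HasDerivAt (fun t => y / a + u₀ * t + logCothRatio U (Ω y t))
      (u₀ * 1 + -2 * U / cusponDenom U (Ω y t) * -(Λ * (a * κ))) t :=
    (((hasDerivAt_id t).const_mul u₀).const_add (y / a)).add
      ((hasDerivAt_logCothRatio hU h).comp t (hasDerivAt_cuspon_phase_t hΩ y t))
  simp only [hX] at huf
  rw [huf, hXt.deriv]
  have hD := (cusponDenom_pos hU (Ω y t)).ne'
  field_simp
  rw [← hΛ]
  ring

lemma hasDerivAt_cuspon_velocity_y (hU : 1 ≤ U) (hΛ : 2 * a * Λ = U)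
    (hΩ : ∀ y t, Ω y t = Λ * (y - a * κ * t))
    (hX : ∀ y t, X y t = y / a + u₀ * t + logCothRatio U (Ω y t))
    (huf : ∀ y t, uf y t = deriv (fun t => X y t) t) {y t : ℝ} (h : Ω y t ≠ 0) :
    HasDerivAt (fun y => uf y t)
      (-(U ^ 2 * κ * ((U ^ 2 - 1) * (2 * sinh (Ω y t) * cosh (Ω y t))) * Λ)
        / cusponDenom U (Ω y t) ^ 2) y := by
  have hΩy := hasDerivAt_cuspon_phase_y hΩ y t
  have hDy := (hasDerivAt_cusponDenom U (Ω y t)).comp y hΩy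
  have hu := ((hasDerivAt_const y (U ^ 2 * κ)).div hDy (cusponDenom_pos hU _).ne').const_add u₀
  refine (hu.congr_of_eventuallyEq ?_).congr_deriv (by simp only [Function.comp_apply]; ring)
  filter_upwards [hΩy.continuousAt.eventually_ne h] with y' hy'
  exact cuspon_velocity_eq hU hΛ hΩ hX huf hy'

lemma cuspon_slope_eq (hU : 1 < U) (ha : a ≠ 0) (hΛ : 2 * a * Λ = U)
    (hΩ : ∀ y t, Ω y t = Λ * (y - a * κ * t))
    (hX : ∀ y t, X y t = y / a + u₀ * t + logCothRatio U (Ω y t))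
    (huf : ∀ y t, uf y t = deriv (fun t => X y t) t) {y t : ℝ} (h : Ω y t ≠ 0) :
    deriv (fun y => uf y t) y / deriv (fun y => X y t) y
      = -(U ^ 3 * κ) * rcoth (Ω y t) / cusponDenom U (Ω y t) := by
  rw [(hasDerivAt_cuspon_velocity_y hU.le hΛ hΩ hX huf h).deriv,
    (hasDerivAt_cuspon_X_y hU.le ha hΛ hΩ hX h).deriv, rcoth]
  have hD := (cusponDenom_pos hU.le (Ω y t)).ne'
  have hs := sinh_ne_zero.mpr h
  have hU2 : U ^ 2 - 1 ≠ 0 := by nlinarith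
  field_simp
  rw [← hΛ]
  ring

lemma tendsto_cuspon_slope {K t : ℝ} {s : ℝ → ℝ} (hU : U ≠ 0) (hΛ : 0 < Λ) (hK : K < 0)
    (hΩ : ∀ y t, Ω y t = Λ * (y - a * κ * t))
    (hs : ∀ y, Ω y t ≠ 0 → s y = K * rcoth (Ω y t) / cusponDenom U (Ω y t)) :
    Tendsto s (𝓝[<] (a * κ * t)) atTop ∧ Tendsto s (𝓝[>] (a * κ * t)) atBot := by
  have hmono : StrictMono (fun y => Ω y t) := fun y y' hy => by
    simp only [hΩ]; gcongr
  have hcont := (hasDerivAt_cuspon_phase_y hΩ (a * κ * t) t).continuousAt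
  have hzero : Ω (a * κ * t) t = 0 := by simp [hΩ]
  have hleft := hmono.tendsto_nhdsLT_of_continuousAt hcont
  have hright := hmono.tendsto_nhdsGT_of_continuousAt hcont
  rw [hzero] at hleft hright
  constructor
  · refine (((tendsto_rcoth_div_cusponDenom_nhdsLT_zero hU).const_mul_atBot_of_neg hK).comp
      hleft).congr' ?_
    filter_upwards [hleft self_mem_nhdsWithin] with y hy
    rw [hs y (ne_of_lt hy), Function.comp_apply, mul_div_assoc]
  · refine (((tendsto_rcoth_div_cusponDenom_nhdsGT_zero hU).const_mul_atTop_of_neg hK).comp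
      hright).congr' ?_
    filter_upwards [hright self_mem_nhdsWithin] with y hy
    rw [hs y (ne_of_gt hy), Function.comp_apply, mul_div_assoc]

end Cuspon

lemma one_cuspon_parameters {u₀ lam₁ h₀ Λ U : ℝ} (hu₀ : 0 < u₀) (hlam₁ : lam₁ ≠ 0)
    (hh₀ : h₀ = 1 / (2 * √u₀)) (hΛ : Λ = √(h₀ ^ 2 + lam₁ ^ 2)) (hU : U = Λ / h₀) :
    1 < U ∧ 2 * √u₀ * Λ = U ∧ 1 / (2 * h₀) = √u₀ := by
  have ha : 0 < √u₀ := sqrt_pos.mpr hu₀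
  have hh₀_pos : 0 < h₀ := by rw [hh₀]; positivity
  have hh₀_lt : h₀ < Λ := by
    rw [hΛ]; exact (lt_sqrt hh₀_pos.le).mpr (lt_add_of_pos_right _ (by positivity))
  refine ⟨hU ▸ (one_lt_div hh₀_pos).mpr hh₀_lt, ?_, ?_⟩
  · rw [hU, hh₀]; field_simp
  · rw [hh₀]; field_simp

/-- for the one-cuspon solution,
`X_y = (U²-1)sinh²Ω/(√u₀[U² + (U²-1)sinh²Ω])`, the slope
`u_X = (∂u/∂y)/X_y = -U³(u₀ - 1/(2λ₁²)) coth Ω/(U² + (U²-1)sinh²Ω)`, and if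
`u₀ > 1/(2λ₁²)` then `u_X → +∞` as `Ω → 0⁻` and `u_X → -∞` as `Ω → 0⁺`. -/
theorem one_cuspon_slope
    (u₀ lam₁ h₀ Λ U : ℝ) (hu₀ : 0 < u₀) (hlam₁ : lam₁ ≠ 0)
    (hh₀ : h₀ = 1 / (2 * Real.sqrt u₀))
    (hΛ : Λ = Real.sqrt (h₀ ^ 2 + lam₁ ^ 2))
    (hU : U = Λ / h₀)
    (Ω : ℝ → ℝ → ℝ)
    (hΩ : ∀ y t, Ω y t = Λ * (y - (1 / (2 * h₀)) * (u₀ - 1 / (2 * lam₁ ^ 2)) * t))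
    (X : ℝ → ℝ → ℝ)
    (hX : ∀ y t, X y t = y / Real.sqrt u₀ + u₀ * t
      + Real.log |(U * rcoth (Ω y t) - 1) / (U * rcoth (Ω y t) + 1)|)
    (uf : ℝ → ℝ → ℝ)
    (huf : ∀ y t, uf y t = deriv (fun t => X y t) t)
    (uX : ℝ → ℝ → ℝ)
    (huX : ∀ y t, uX y t = deriv (fun y => uf y t) y / deriv (fun y => X y t) y) :
    (∀ y t, Ω y t ≠ 0 →
      deriv (fun y => X y t) y
        = (U ^ 2 - 1) * (Real.sinh (Ω y t)) ^ 2
          / (Real.sqrt u₀ * (U ^ 2 + (U ^ 2 - 1) * (Real.sinh (Ω y t)) ^ 2))) ∧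
    (∀ y t, Ω y t ≠ 0 →
      uX y t = -(U ^ 3 * (u₀ - 1 / (2 * lam₁ ^ 2)))
        * rcoth (Ω y t) / (U ^ 2 + (U ^ 2 - 1) * (Real.sinh (Ω y t)) ^ 2)) ∧
    (u₀ > 1 / (2 * lam₁ ^ 2) → ∀ t,
      Tendsto (fun y => uX y t)
        (𝓝[<] ((1 / (2 * h₀)) * (u₀ - 1 / (2 * lam₁ ^ 2)) * t)) atTop ∧
      Tendsto (fun y => uX y t)
        (𝓝[>] ((1 / (2 * h₀)) * (u₀ - 1 / (2 * lam₁ ^ 2)) * t)) atBot) := by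
  obtain ⟨hU₁, hΛU, hc⟩ := one_cuspon_parameters hu₀ hlam₁ hh₀ hΛ hU
  rw [hc] at hΩ ⊢
  have ha : 0 < √u₀ := sqrt_pos.mpr hu₀
  have hΛ₀ : 0 < Λ := pos_of_mul_pos_right (hΛU ▸ one_pos.trans hU₁) (by positivity)
  have hslope : ∀ y t, Ω y t ≠ 0 → uX y t = -(U ^ 3 * (u₀ - 1 / (2 * lam₁ ^ 2)))
      * rcoth (Ω y t) / cusponDenom U (Ω y t) := fun y t h =>
    (huX y t).trans (cuspon_slope_eq hU₁ ha.ne' hΛU hΩ hX huf h)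
  refine ⟨fun y t h => (hasDerivAt_cuspon_X_y hU₁.le ha.ne' hΛU hΩ hX h).deriv, hslope,
    fun hκ t => tendsto_cuspon_slope (one_pos.trans hU₁).ne' hΛ₀ ?_ hΩ (hslope · t)⟩
  exact neg_neg_of_pos (mul_pos (by positivity) (sub_pos.mpr hκ))
end

section
/- The cusp trajectory Ω(y,t) = 0 of the one-cuspon solution, mapped to the physical x-axis via X(y,t) = y/√u₀ + u₀t + const along Ω = 0, moves with velocity dx/dt = 2(u₀ - 1/(4λ₁²)). Consequently: if u₀ > 1/(2λ₁²) the cusp moves right; if 1/(4λ₁²) < u₀ < 1/(2λ₁²) it moves right; if u₀ < 1/(4λ₁²) it moves left; and u₀ = 1/(4λ₁²) gives a standing wave. -/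
theorem one_div_four_mul_le_one_div_two_mul {a : ℝ} (ha : 0 ≤ a) :
    1 / (4 * a) ≤ 1 / (2 * a) := by
  have halve : 1 / (4 * a) = 1 / (2 * a) / 2 := by ring
  have hnonneg : 0 ≤ 1 / (2 * a) := by positivity
  linarith

theorem cusp_position_eq_affine {u₀ lam₁ c : ℝ} (hu₀ : 0 < u₀) {y x : ℝ → ℝ}
    (hy : ∀ t, y t = Real.sqrt u₀ * (u₀ - 1 / (2 * lam₁ ^ 2)) * t)
    (hx : ∀ t, x t = y t / Real.sqrt u₀ + u₀ * t + c) :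
    x = fun t => 2 * (u₀ - 1 / (4 * lam₁ ^ 2)) * t + c := by
  have hs : Real.sqrt u₀ ≠ 0 := (Real.sqrt_pos.mpr hu₀).ne'
  funext t
  rw [hx, hy, mul_assoc, mul_div_cancel_left₀ _ hs]
  ring

theorem hasDerivAt_mul_add_const (v c t : ℝ) : HasDerivAt (fun s => v * s + c) v t := by
  simpa using ((hasDerivAt_id t).const_mul v).add_const c

theorem cusp_velocity_general
    (u₀ lam₁ c : ℝ) (hu₀ : 0 < u₀)
    (y x : ℝ → ℝ)
    (hy : ∀ t, y t = Real.sqrt u₀ * (u₀ - 1 / (2 * lam₁ ^ 2)) * t)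
    (hx : ∀ t, x t = y t / Real.sqrt u₀ + u₀ * t + c) :
    ∀ t, HasDerivAt x (2 * (u₀ - 1 / (4 * lam₁ ^ 2))) t ∧
      (u₀ > 1 / (2 * lam₁ ^ 2) → 0 < deriv x t) ∧
      (1 / (4 * lam₁ ^ 2) < u₀ ∧ u₀ < 1 / (2 * lam₁ ^ 2) → 0 < deriv x t) ∧
      (u₀ < 1 / (4 * lam₁ ^ 2) → deriv x t < 0) ∧
      (u₀ = 1 / (4 * lam₁ ^ 2) → deriv x t = 0) := by
  intro t
  have hderiv : HasDerivAt x (2 * (u₀ - 1 / (4 * lam₁ ^ 2))) t := by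
    rw [cusp_position_eq_affine hu₀ hy hx]
    exact hasDerivAt_mul_add_const _ _ t
  have hquarter := one_div_four_mul_le_one_div_two_mul (sq_nonneg lam₁)
  rw [hderiv.deriv]
  refine ⟨hderiv, fun h => ?_, fun ⟨h, _⟩ => ?_, fun h => ?_, fun h => ?_⟩ <;> linarith

/-- the cusp trajectory, with `y(t) = √u₀(u₀ - 1/(2λ₁²))t` on the
cusp line `Ω = 0` and `x(t) = y(t)/√u₀ + u₀t + c`, moves with velocity
`dx/dt = 2(u₀ - 1/(4λ₁²))`; it moves right if `u₀ > 1/(2λ₁²)` or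
`1/(4λ₁²) < u₀ < 1/(2λ₁²)`, left if `u₀ < 1/(4λ₁²)`, and stands if
`u₀ = 1/(4λ₁²)`. -/
theorem cusp_velocity
    (u₀ lam₁ c : ℝ) (hu₀ : 0 < u₀) (hlam₁ : lam₁ ≠ 0)
    (y x : ℝ → ℝ)
    (hy : ∀ t, y t = Real.sqrt u₀ * (u₀ - 1 / (2 * lam₁ ^ 2)) * t)
    (hx : ∀ t, x t = y t / Real.sqrt u₀ + u₀ * t + c) :
    ∀ t, HasDerivAt x (2 * (u₀ - 1 / (4 * lam₁ ^ 2))) t ∧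
      (u₀ > 1 / (2 * lam₁ ^ 2) → 0 < deriv x t) ∧
      (1 / (4 * lam₁ ^ 2) < u₀ ∧ u₀ < 1 / (2 * lam₁ ^ 2) → 0 < deriv x t) ∧
      (u₀ < 1 / (4 * lam₁ ^ 2) → deriv x t < 0) ∧
      (u₀ = 1 / (4 * lam₁ ^ 2) → deriv x t = 0) :=
  cusp_velocity_general u₀ lam₁ c hu₀ y x hy hx
end
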